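/- Let G be a σ-compact locally compact abelian group with Haar measure θ_G. For any relatively compact A ⊂ G there exists a van Hove sequence (A_n) of compact sets such that A_n = cl(int(A_n)), θ_G(∂A_n) = 0, A_n ⊂ int(A_{n+1}), and A ⊂ A_n for all n. -/

import Mathlib

/-!
Fix a symmetric compact neighbourhood `V` of `0` containing the compact set to be absorbed.
In an abelian group the sumsets `m • V` grow subexponentially: `V` is covered by `N` translates
of some `U` with `U + U ⊆ V`, so `μ ((2 * m) • V) ≤ (2 * m + 1) ^ N * μ (m • V)`. Hence
`μ ((n + 4) • V) ≤ (1 + ε) * μ (n • V)` for some `n`, and for every `S` squeezed between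
`(n + 2) • V` and `(n + 3) • V` the `V`-boundary of `S` lies in `(n + 4) • V \ n • V`, so it has
measure at most `ε * μ S`. Taking for `S` the closure of a sublevel set `{f < t}` of an Urysohn
function, at a level `t` whose level set is null, makes `S` regular closed with null frontier.
Iterating with `ε = 1 / (j + 1)` while absorbing a compact exhaustion gives the sequence.
-/

open MeasureTheory Set Filter Pointwise Topology
open scoped ENNReal

namespace Finset

variable {G : Type*} [AddCommMonoid G] [DecidableEq G]

theorem exists_sum_nsmul_of_mem_nsmul {F : Finset G} {n : ℕ} {x : G} (hx : x ∈ n • F) :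
    ∃ c : F → ℕ, (∀ f, c f ≤ n) ∧ x = ∑ f, c f • (f : G) := by
  induction n generalizing x with
  | zero =>
    rw [zero_nsmul, mem_zero] at hx
    exact ⟨0, fun _ => le_rfl, by simp [hx]⟩
  | succ n ih =>
    obtain ⟨y, hy, f₀, hf₀, rfl⟩ := mem_add.1 (succ_nsmul F n ▸ hx)
    obtain ⟨c, hc, rfl⟩ := ih hy
    refine ⟨c + Pi.single ⟨f₀, hf₀⟩ 1, fun f => ?_, ?_⟩
    · have := hc f
      rw [Pi.add_apply, Pi.single_apply]
      split <;> omega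
    · simp only [Pi.add_apply, add_smul, sum_add_distrib, Pi.single_apply, ite_smul, one_smul,
        zero_smul, sum_ite_eq', mem_univ, if_true]

theorem card_nsmul_le_add_one_pow (F : Finset G) (n : ℕ) : #(n • F) ≤ (n + 1) ^ #F := by
  let φ : (F → ℕ) → G := fun c => ∑ f, c f • (f : G)
  have hsub : n • F ⊆ (Fintype.piFinset fun _ : F => range (n + 1)).image φ := by
    intro x hx
    obtain ⟨c, hc, rfl⟩ := exists_sum_nsmul_of_mem_nsmul hx
    exact mem_image_of_mem φ (Fintype.mem_piFinset.2 fun f => mem_range_succ_iff.2 (hc f))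
  calc #(n • F) ≤ #((Fintype.piFinset fun _ : F => range (n + 1)).image φ) := card_le_card hsub
    _ ≤ #(Fintype.piFinset fun _ : F => range (n + 1)) := card_image_le
    _ = (n + 1) ^ #F := by simp

end Finset

theorem IsCompact.nsmul {G : Type*} [AddMonoid G] [TopologicalSpace G] [ContinuousAdd G]
    {V : Set G} (hV : IsCompact V) : ∀ n : ℕ, IsCompact (n • V)
  | 0 => by simp
  | n + 1 => by rw [succ_nsmul]; exact (hV.nsmul n).add hV

theorem measure_finset_add_le {G : Type*} [AddGroup G] [MeasurableSpace G] [MeasurableAdd G]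
    (μ : Measure G) [μ.IsAddLeftInvariant] (H : Finset G) (X : Set G) :
    μ (↑H + X) ≤ H.card * μ X := by
  rw [← iUnion_add_left_image]
  calc μ (⋃ h ∈ H, (h + ·) '' X) ≤ ∑ h ∈ H, μ ((h + ·) '' X) := measure_biUnion_finset_le H _
    _ = H.card * μ X := by simp [image_add_left, measure_preimage_add]

theorem eventually_natCast_pow_lt_pow (a N : ℕ) {r : ℝ} (hr : 1 < r) :
    ∀ᶠ k : ℕ in atTop, ((a * k + 1 : ℕ) : ℝ) ^ N < r ^ k := by
  have hC : (0 : ℝ) < ((a + 1 : ℕ) : ℝ) ^ N := by positivity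
  filter_upwards [(tendsto_pow_const_div_const_pow_of_one_lt N hr).eventually
    (gt_mem_nhds (inv_pos.2 hC)), eventually_ge_atTop 1] with k hk hk1
  rw [div_lt_iff₀ (by positivity), inv_mul_eq_div, lt_div_iff₀' hC] at hk
  calc ((a * k + 1 : ℕ) : ℝ) ^ N ≤ ((a + 1 : ℕ) : ℝ) ^ N * (k : ℝ) ^ N := by
        rw [← mul_pow]
        gcongr
        norm_cast
        nlinarith
    _ < r ^ k := hk

theorem exists_le_ofReal_mul_of_two_mul_le {b : ℕ → ℝ≥0∞} (hb : Monotone b) (hb1 : b 1 ≠ 0)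
    (hb_top : ∀ n, b n ≠ ∞) {N : ℕ} (hdbl : ∀ m, b (2 * m) ≤ (2 * m + 1) ^ N * b m) (p : ℕ)
    {r : ℝ} (hr : 1 < r) : ∃ n, b (n + p) ≤ ENNReal.ofReal r * b n := by
  have hr1 : 1 ≤ ENNReal.ofReal r := ENNReal.one_le_ofReal.2 hr.le
  rcases p.eq_zero_or_pos with rfl | hp
  · exact ⟨0, le_mul_of_one_le_left zero_le hr1⟩
  by_contra! hgrow
  have hchain (m i : ℕ) : ENNReal.ofReal r ^ i * b m ≤ b (m + p * i) := by
    induction i with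
    | zero => simp
    | succ i ih =>
      calc ENNReal.ofReal r ^ (i + 1) * b m = ENNReal.ofReal r * (ENNReal.ofReal r ^ i * b m) := by
            ring
        _ ≤ ENNReal.ofReal r * b (m + p * i) := by gcongr
        _ ≤ b (m + p * (i + 1)) := by rw [mul_add_one, ← add_assoc]; exact (hgrow _).le
  -- going from `p * k` to `2 * p * k`, the exponential growth `r ^ k` beats the doubling bound
  obtain ⟨k, hk, hk1⟩ := ((eventually_natCast_pow_lt_pow (2 * p) N hr).and
    (eventually_ge_atTop 1)).exists
  have hbk : b (p * k) ≠ 0 :=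
    ne_bot_of_le_ne_bot hb1 (hb (Nat.one_le_iff_ne_zero.2 (by positivity)))
  have hle : ENNReal.ofReal r ^ k * b (p * k) ≤ ((2 * p * k + 1 : ℕ) : ℝ≥0∞) ^ N * b (p * k) := by
    calc ENNReal.ofReal r ^ k * b (p * k) ≤ b (p * k + p * k) := hchain _ _
      _ = b (2 * (p * k)) := by rw [two_mul]
      _ ≤ _ := by simpa [mul_assoc] using hdbl (p * k)
  rw [ENNReal.mul_le_mul_iff_left hbk (hb_top _), ← ENNReal.ofReal_pow (by linarith),
    ← ENNReal.ofReal_natCast, ← ENNReal.ofReal_pow (Nat.cast_nonneg _),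
    ENNReal.ofReal_le_ofReal_iff (by positivity)] at hle
  exact hle.not_gt hk

theorem exists_isClosed_between_measure_frontier_eq_zero {X : Type*} [TopologicalSpace X]
    [RegularSpace X] [LocallyCompactSpace X] [MeasurableSpace X] [OpensMeasurableSpace X]
    (μ : Measure X) {K U : Set X} (hK : IsCompact K) (hU : IsOpen U) (hKU : K ⊆ U)
    (hμU : μ U ≠ ∞) :
    ∃ S, IsClosed S ∧ K ⊆ interior S ∧ S ⊆ U ∧ closure (interior S) = S ∧
      μ (frontier S) = 0 := by
  obtain ⟨f, hfK, hfU, -⟩ := exists_continuous_zero_one_of_isCompact hK hU.isClosed_compl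
    (disjoint_compl_right_iff_subset.2 hKU)
  have : IsFiniteMeasure (μ.restrict U) := isFiniteMeasure_restrict.2 hμU
  obtain ⟨t, ht_null, ht⟩ : ∃ t ∈ {t : ℝ | 0 < μ.restrict U {x | f x = t}}ᶜ, t ∈ Ioo 0 1 :=
    ((Measure.countable_meas_level_set_pos f.continuous.measurable).dense_compl ℝ).exists_mem_open
      isOpen_Ioo (nonempty_Ioo.2 zero_lt_one)
  have hle_U : {x | f x ≤ t} ⊆ U := fun x hx => by
    by_contra hxU
    have : f x = 1 := hfU hxU
    exact ht.2.not_ge (this ▸ hx)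
  set S := closure {x | f x < t}
  have hint : {x | f x < t} ⊆ interior S :=
    interior_maximal subset_closure (isOpen_lt f.continuous continuous_const)
  have hS_le : S ⊆ {x | f x ≤ t} :=
    closure_minimal (fun x (hx : f x < t) => hx.le) (isClosed_le f.continuous continuous_const)
  have hfr : frontier S ⊆ {x | f x = t} := fun x hx => by
    rw [isClosed_closure.frontier_eq] at hx
    exact le_antisymm (hS_le hx.1) (not_lt.1 fun h => hx.2 (hint h))
  refine ⟨S, isClosed_closure, fun x hx => hint ?_, hS_le.trans hle_U,
    (closure_minimal interior_subset isClosed_closure).antisymm (closure_mono hint),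
    measure_mono_null hfr ?_⟩
  · show f x < t
    rw [hfK hx]
    exact ht.1
  · rw [← Measure.restrict_eq_self μ (s := {x | f x = t}) fun x (hx : f x = t) => hle_U hx.le]
    exact nonpos_iff_eq_zero.1 (not_lt.1 ht_null)

section VanHoveBoundary

variable {G : Type*} [TopologicalSpace G]

/-- The set `∂^K A` of the van Hove condition. -/
def vanHoveBoundary [Add G] (K A : Set G) : Set G :=
  ((K + closure A) ∩ closure Aᶜ) ∪ ((K + closure Aᶜ) ∩ closure A)

theorem vanHoveBoundary_mono [Add G] {K K' : Set G} (hK : K ⊆ K') (A : Set G) :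
    vanHoveBoundary K A ⊆ vanHoveBoundary K' A := by
  unfold vanHoveBoundary
  gcongr

theorem vanHoveBoundary_subset_diff [AddGroup G] {K A L M : Set G} (hK : 0 ∈ K)
    (hL : -K + L ⊆ interior A) (hM : K + closure A ⊆ M) : vanHoveBoundary K A ⊆ M \ L := by
  have h0 : (0 : G) ∈ -K := by simpa using hK
  have hL' : L ⊆ interior A := fun x hx => hL ⟨0, h0, x, hx, zero_add x⟩
  have hA : closure A ⊆ M := fun x hx => hM ⟨0, hK, x, hx, zero_add x⟩
  rintro x (⟨hxM, hx⟩ | ⟨⟨k, hk, y, hy, rfl⟩, hx⟩)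
  · rw [closure_compl] at hx
    exact ⟨hM hxM, fun hxL => hx (hL' hxL)⟩
  · rw [closure_compl] at hy
    exact ⟨hA hx, fun hxL => hy (hL ⟨-k, neg_mem_neg.2 hk, k + y, hxL, neg_add_cancel_left k y⟩)⟩

end VanHoveBoundary

section TopologicalAddGroup

variable {G : Type*} [AddCommGroup G] [TopologicalSpace G] [IsTopologicalAddGroup G]

theorem exists_isCompact_neg_eq_superset_mem_nhds [LocallyCompactSpace G] {D : Set G}
    (hD : IsCompact D) : ∃ V, IsCompact V ∧ V ∈ 𝓝 0 ∧ -V = V ∧ D ⊆ V := by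
  obtain ⟨W, hWc, hW0⟩ := exists_compact_mem_nhds (0 : G)
  refine ⟨(D ∪ W) ∪ -(D ∪ W), (hD.union hWc).union (hD.union hWc).neg,
    mem_of_superset hW0 (subset_union_right.trans subset_union_left), ?_,
    subset_union_left.trans subset_union_left⟩
  simp only [union_neg, neg_neg, union_comm]

variable [MeasurableSpace G] [BorelSpace G] (μ : Measure G)

theorem exists_measure_two_mul_nsmul_le [μ.IsAddLeftInvariant] {V : Set G} (hV : IsCompact V)
    (hV0 : V ∈ 𝓝 0) : ∃ N : ℕ, ∀ m : ℕ, μ ((2 * m) • V) ≤ (2 * m + 1) ^ N * μ (m • V) := by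
  classical
  obtain ⟨U, hUo, hU0, hUV⟩ := exists_open_nhds_zero_half hV0
  obtain ⟨F, -, hVF⟩ := hV.elim_nhds_subcover (fun x => x +ᵥ U)
    fun x _ => vadd_mem_nhds_self.2 (hUo.mem_nhds hU0)
  have hVFU : V ⊆ ↑F + U := fun v hv => by
    obtain ⟨x, hx, u, hu, rfl⟩ := mem_iUnion₂.1 (hVF hv)
    exact add_mem_add hx hu
  have hUU (m : ℕ) : (2 * m) • U ⊆ m • V := by
    rw [mul_nsmul, two_nsmul]
    exact nsmul_subset_nsmul_left (add_subset_iff.2 hUV)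
  refine ⟨F.card, fun m => ?_⟩
  have hsub : (2 * m) • V ⊆ ↑((2 * m) • F) + m • V := by
    calc (2 * m) • V ⊆ (2 * m) • (↑F + U) := nsmul_subset_nsmul_left hVFU
      _ = ↑((2 * m) • F) + (2 * m) • U := by rw [nsmul_add, Finset.coe_nsmul]
      _ ⊆ ↑((2 * m) • F) + m • V := add_subset_add_left (hUU m)
  calc μ ((2 * m) • V) ≤ ((2 * m) • F).card * μ (m • V) :=
        (measure_mono hsub).trans (measure_finset_add_le μ _ _)
    _ ≤ (2 * m + 1) ^ F.card * μ (m • V) := by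
        gcongr
        exact_mod_cast Finset.card_nsmul_le_add_one_pow F (2 * m)

theorem measure_vanHoveBoundary_le_sub [IsFiniteMeasureOnCompacts μ] {V S : Set G}
    (hV : IsCompact V) (hV0 : V ∈ 𝓝 0) (hV_neg : -V = V) (hS : IsClosed S) {n : ℕ}
    (hS_int : (n + 2) • V ⊆ interior S) (hS_sub : S ⊆ (n + 3) • V) :
    μ (vanHoveBoundary V S) ≤ μ ((n + 4) • V) - μ (n • V) := by
  have hP_succ (k : ℕ) : V + k • V = (k + 1) • V := (succ_nsmul' V k).symm
  -- `n • V` need not be measurable (`G` is not assumed Hausdorff), so remove the open set `L`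
  set L := n • V + interior V
  have hL_sub : L ⊆ (n + 1) • V := by
    rw [succ_nsmul]
    exact add_subset_add_left interior_subset
  have hbdry : vanHoveBoundary V S ⊆ (n + 4) • V \ L := by
    refine vanHoveBoundary_subset_diff (mem_of_mem_nhds hV0) ?_ ?_
    · rw [hV_neg]
      exact (add_subset_add_left hL_sub).trans ((hP_succ _).trans_subset hS_int)
    · rw [hS.closure_eq, ← hP_succ]
      exact add_subset_add_left hS_sub
  calc μ (vanHoveBoundary V S) ≤ μ ((n + 4) • V \ L) := measure_mono hbdry
    _ = μ ((n + 4) • V) - μ L :=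
        measure_sdiff (hL_sub.trans (nsmul_subset_nsmul_right (mem_of_mem_nhds hV0) (by omega)))
          isOpen_interior.add_left.nullMeasurableSet
          ((measure_mono hL_sub).trans_lt (hV.nsmul _).measure_lt_top).ne
    _ ≤ μ ((n + 4) • V) - μ (n • V) :=
        tsub_le_tsub_left (measure_mono (subset_add_left _ (mem_interior_iff_mem_nhds.2 hV0))) _

variable [LocallyCompactSpace G]

theorem exists_isClosed_nsmul_between [IsFiniteMeasureOnCompacts μ] {V : Set G} (hV : IsCompact V)
    (hV0 : V ∈ 𝓝 0) (k : ℕ) :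
    ∃ S, IsClosed S ∧ k • V ⊆ interior S ∧ S ⊆ (k + 1) • V ∧ closure (interior S) = S ∧
      μ (frontier S) = 0 := by
  have hO : k • V + interior V ⊆ (k + 1) • V := by
    rw [succ_nsmul]
    exact add_subset_add_left interior_subset
  obtain ⟨S, hS_closed, hS_int, hSO, hS_reg, hS_fr⟩ :=
    exists_isClosed_between_measure_frontier_eq_zero μ (hV.nsmul k) isOpen_interior.add_left
      (fun x hx => ⟨x, hx, 0, mem_interior_iff_mem_nhds.2 hV0, add_zero x⟩)
      ((measure_mono hO).trans_lt (hV.nsmul _).measure_lt_top).ne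
  exact ⟨S, hS_closed, hS_int, hSO.trans hO, hS_reg, hS_fr⟩

theorem exists_vanHove_step [μ.IsAddHaarMeasure] {D : Set G} (hD : IsCompact D) {ε : ℝ}
    (hε : 0 < ε) :
    ∃ S, IsCompact S ∧ D ⊆ interior S ∧ closure (interior S) = S ∧ μ (frontier S) = 0 ∧
      0 < μ S ∧ μ (vanHoveBoundary D S) ≤ ENNReal.ofReal ε * μ S := by
  obtain ⟨V, hVc, hV0, hV_neg, hDV⟩ := exists_isCompact_neg_eq_superset_mem_nhds hD
  have h0V : (0 : G) ∈ V := mem_of_mem_nhds hV0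
  have hP_mono {k l : ℕ} (h : k ≤ l) : k • V ⊆ l • V := nsmul_subset_nsmul_right h0V h
  obtain ⟨N, hN⟩ := exists_measure_two_mul_nsmul_le μ hVc hV0
  obtain ⟨n, hn⟩ := exists_le_ofReal_mul_of_two_mul_le (b := fun m => μ (m • V))
    (fun _ _ h => measure_mono (hP_mono h))
    (by simpa using (Measure.measure_pos_of_mem_nhds μ hV0).ne')
    (fun m => (hVc.nsmul m).measure_lt_top.ne) hN 4 (r := 1 + ε) (by linarith)
  obtain ⟨S, hS_closed, hS_int, hS_sub, hS_reg, hS_fr⟩ :=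
    exists_isClosed_nsmul_between μ hVc hV0 (n + 2)
  have hV_int : V ⊆ interior S := by
    simpa using (hP_mono (show 1 ≤ n + 2 by omega)).trans hS_int
  refine ⟨S, (hVc.nsmul _).of_isClosed_subset hS_closed hS_sub, hDV.trans hV_int, hS_reg, hS_fr,
    Measure.measure_pos_of_nonempty_interior μ ⟨0, hV_int h0V⟩, ?_⟩
  calc μ (vanHoveBoundary D S)
      ≤ μ ((n + 4) • V) - μ (n • V) :=
        (measure_mono (vanHoveBoundary_mono hDV S)).trans
          (measure_vanHoveBoundary_le_sub μ hVc hV0 hV_neg hS_closed hS_int hS_sub)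
    _ ≤ ENNReal.ofReal (1 + ε) * μ (n • V) - μ (n • V) := tsub_le_tsub_right hn _
    _ = ENNReal.ofReal ε * μ (n • V) := by
        rw [ENNReal.ofReal_add zero_le_one hε.le, ENNReal.ofReal_one, one_add_mul,
          ENNReal.add_sub_cancel_left (hVc.nsmul n).measure_lt_top.ne]
    _ ≤ ENNReal.ofReal ε * μ S := by
        gcongr
        exact ((hP_mono (Nat.le_add_right n 2)).trans hS_int).trans interior_subset

open TopologicalSpace in
theorem exists_nested_seq_vanHove_step [μ.IsAddHaarMeasure] {K : ℕ → Set G}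
    (hK : ∀ j, IsCompact (K j)) {ε : ℕ → ℝ} (hε : ∀ j, 0 < ε j) :
    ∃ S : ℕ → Set G, ∀ j, IsCompact (S j) ∧ K j ⊆ interior (S j) ∧
      S j ⊆ interior (S (j + 1)) ∧ closure (interior (S j)) = S j ∧ μ (frontier (S j)) = 0 ∧
      0 < μ (S j) ∧ μ (vanHoveBoundary (K j) (S j)) ≤ ENNReal.ofReal (ε j) * μ (S j) := by
  choose! step hstep using fun (D : Compacts G) (j : ℕ) => exists_vanHove_step μ D.isCompact (hε j)
  let K' (j : ℕ) : Compacts G := ⟨K j, hK j⟩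
  obtain ⟨D, hD0, hD_succ⟩ : ∃ D : ℕ → Compacts G, D 0 = K' 0 ∧
      ∀ j, D (j + 1) = K' (j + 1) ⊔ ⟨step (D j) j, (hstep (D j) j).1⟩ :=
    ⟨fun j => Nat.rec (K' 0) (fun j Dj => K' (j + 1) ⊔ ⟨step Dj j, (hstep Dj j).1⟩) j, rfl,
      fun _ => rfl⟩
  have hKD (j : ℕ) : K j ⊆ D j := by
    cases j with
    | zero => rw [hD0]; exact subset_rfl
    | succ j => rw [hD_succ]; exact subset_union_left
  have hSD (j : ℕ) : step (D j) j ⊆ D (j + 1) := by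
    rw [hD_succ]
    exact subset_union_right
  refine ⟨fun j => step (D j) j, fun j => ?_⟩
  obtain ⟨hc, hint, hreg, hfr, hpos, hbd⟩ := hstep (D j) j
  exact ⟨hc, (hKD j).trans hint, (hSD j).trans (hstep (D (j + 1)) (j + 1)).2.1, hreg, hfr, hpos,
    (measure_mono (vanHoveBoundary_mono (hKD j) _)).trans hbd⟩

end TopologicalAddGroup

/-- In a σ-compact LCA group, for any relatively compact A there exists a nested van Hove
sequence of topologically regular compact sets with null boundary containing A. -/
theorem stmt17 {G : Type*} [AddCommGroup G] [TopologicalSpace G] [IsTopologicalAddGroup G]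
    [LocallyCompactSpace G] [SigmaCompactSpace G] [MeasurableSpace G] [BorelSpace G]
    (μ : Measure G) [μ.IsAddHaarMeasure]
    (A : Set G) (hA : IsCompact (closure A)) :
    ∃ S : ℕ → Set G,
      (∀ n, IsCompact (S n)) ∧
      (∀ n, 0 < μ (S n)) ∧
      (∀ n, S n = closure (interior (S n))) ∧
      (∀ n, μ (frontier (S n)) = 0) ∧
      (∀ n, S n ⊆ interior (S (n + 1))) ∧
      (∀ n, A ⊆ S n) ∧
      (∀ K : Set G, IsCompact K →
        Tendsto (fun n =>
          μ (((K + closure (S n)) ∩ closure (S n)ᶜ) ∪ ((K + closure (S n)ᶜ) ∩ closure (S n)))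
            / μ (S n)) atTop (nhds 0)) := by
  let C := CompactExhaustion.choice G
  obtain ⟨S, hS⟩ := exists_nested_seq_vanHove_step μ (fun j => hA.union (C.isCompact j))
    (ε := fun j => 1 / (j + 1)) fun j => Nat.one_div_pos_of_nat
  choose hc hint hnest hreg hfr hpos hbd using hS
  refine ⟨S, hc, hpos, fun n => (hreg n).symm, hfr, hnest,
    fun n => subset_closure.trans (subset_union_left.trans ((hint n).trans interior_subset)), ?_⟩
  intro K hK
  obtain ⟨m, hKm⟩ := C.exists_superset_of_isCompact hK
  have hlim : Tendsto (fun n : ℕ => ENNReal.ofReal (1 / (n + 1))) atTop (𝓝 0) := by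
    simpa using ENNReal.tendsto_ofReal tendsto_one_div_add_atTop_nhds_zero_nat
  refine tendsto_of_tendsto_of_tendsto_of_le_of_le' tendsto_const_nhds hlim
    (Eventually.of_forall fun _ => zero_le) (eventually_atTop.2 ⟨m, fun n hn => ?_⟩)
  have hKn : K ⊆ closure A ∪ C n := (hKm.trans (C.subset hn)).trans subset_union_right
  exact ENNReal.div_le_of_le_mul ((measure_mono (vanHoveBoundary_mono hKn (S n))).trans (hbd n))
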